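/- arXiv:2008.04000 — 3 statements merged into one kernel-verified Lean document; each statement's English description precedes it below -/
import Mathlib

section
/- For n ≥ 2, equality Vol(B^n_p) · Vol((B^n_p)°) = 4^n / n! holds if and only if p = 1 or p = ∞. -/
open MeasureTheory
open scoped ENNReal

/-- The open unit ball of the `l^p` norm in `ℝ^n`, for `p ∈ [1, ∞]`. -/
noncomputable def lpBall (n : ℕ) (p : ℝ≥0∞) : Set (Fin n → ℝ) :=
  if p = ⊤ then {x | ∀ i, |x i| < 1} else {x | ∑ i, |x i| ^ p.toReal < 1}

/-- The polar of a subset of `ℝ^n` with respect to the Euclidean inner product. -/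
def polarSet {n : ℕ} (S : Set (Fin n → ℝ)) : Set (Fin n → ℝ) :=
  {x | ∀ y ∈ S, ∑ i, y i * x i ≤ 1}

/-!
For `1 < p < ∞` with conjugate exponent `q`, Hölder's inequality puts `B_q` inside the polar of
`B_p`. With `a = 1/p`, `b = 1/q` the volume formula for `l^p` balls then bounds the Mahler volume
below by `4^n (Γ(1 + a) Γ(1 + b))^n / (Γ(1 + n a) Γ(1 + n b))`, so it suffices that
`Γ(1 + n a) Γ(1 + n b) < n! (Γ(1 + a) Γ(1 + b))^n`. Both sides come from Euler products
`∏ₖ (1 + a b n² / ((k + 1)(k + 1 + n)))`: each factor of index `κ ∈ [n k, n k + n)` for `n`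
dominates the factor of index `k` for `n = 1`; at `κ = 0` it does so by a fixed ratio `> 1`
when `n ≥ 2`, and that gain survives the limit. For `p = 1` and `p = ∞` the polar bodies are the closed cube and
the closed cross-polytope, of volumes `2^n` and `2^n / n!`.
-/

open Real Filter Finset Topology

theorem Real.tendsto_prod_div_Gamma {u v w : ℝ} (hu : 0 < u) (hv : 0 < v) (hw : 0 < w)
    (huv : u + v = 1 + w) :
    Tendsto (fun m ↦ ∏ k ∈ range m, (u + k) * (v + k) / ((1 + k) * (w + k))) atTop
      (𝓝 (Gamma w / (Gamma u * Gamma v))) := by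
  have hlim := ((GammaSeq_tendsto_Gamma 1).mul (GammaSeq_tendsto_Gamma w)).div
    ((GammaSeq_tendsto_Gamma u).mul (GammaSeq_tendsto_Gamma v))
    (mul_ne_zero (Gamma_pos_of_pos hu).ne' (Gamma_pos_of_pos hv).ne')
  rw [Gamma_one, one_mul] at hlim
  rw [← tendsto_add_atTop_iff_nat 1]
  refine hlim.congr' ?_
  filter_upwards [eventually_ge_atTop 1] with N hN1
  have hN : (0 : ℝ) < N := by exact_mod_cast hN1
  have hpow : (N : ℝ) ^ (1 : ℝ) * N ^ w = N ^ u * N ^ v := by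
    rw [← rpow_add hN, ← rpow_add hN, huv]
  have hP : ∀ z : ℝ, 0 < z → 0 < ∏ j ∈ range (N + 1), (z + j) := fun z hz ↦
    prod_pos fun j _ ↦ by positivity
  have hPu := hP u hu
  have hPv := hP v hv
  have hPw := hP w hw
  have hP1 := hP 1 one_pos
  simp only [Pi.div_apply, GammaSeq, prod_div_distrib, prod_mul_distrib]
  field_simp
  rw [hpow]

theorem Finset.prod_range_mul_comp_div {M : Type*} [CommMonoid M] (f : ℕ → M) (n m : ℕ) :
    ∏ k ∈ range (n * m), f (k / n) = (∏ k ∈ range m, f k) ^ n := by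
  induction m with
  | zero => simp
  | succ m ih =>
    have hblock : ∀ j ∈ range n, f ((n * m + j) / n) = f m := fun j hj ↦ by
      rw [Nat.mul_add_div (Nat.zero_lt_of_lt (mem_range.1 hj)), Nat.div_eq_of_lt (mem_range.1 hj),
        add_zero]
    rw [Nat.mul_succ, prod_range_add, ih, prod_congr rfl hblock, prod_const, card_range,
      prod_range_succ, mul_pow]

theorem Finset.mul_prod_le_mul_prod {ι R : Type*} [CommSemiring R] [PartialOrder R]
    [IsOrderedRing R] [DecidableEq ι] {s : Finset ι} {f g : ι → R} {i : ι}
    (hf : ∀ j ∈ s, 0 ≤ f j) (hfg : ∀ j ∈ s, f j ≤ g j) (hi : i ∈ s) :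
    g i * ∏ j ∈ s, f j ≤ f i * ∏ j ∈ s, g j := by
  rw [← mul_prod_erase s f hi, ← mul_prod_erase s g hi, mul_left_comm]
  gcongr with j hj <;> grind [mem_of_mem_erase]

/- For `a + b = 1` and `c = a b`, `(k + 1 + n a) (k + 1 + n b) = (k + 1) (k + 1 + n) + c n²`,
so this is the `k`-th factor of the Euler product of `n! / (Γ(1 + n a) Γ(1 + n b))`. -/
noncomputable def eulerFactor (c : ℝ) (n k : ℕ) : ℝ :=
  1 + c * n ^ 2 / ((k + 1) * (k + 1 + n))

section eulerFactor

variable {c : ℝ}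

theorem one_le_eulerFactor (hc : 0 ≤ c) (n k : ℕ) : 1 ≤ eulerFactor c n k :=
  le_add_of_nonneg_right (by positivity)

theorem eulerFactor_one_le_eulerFactor (hc : 0 ≤ c) {n k κ : ℕ} (h : κ + 1 ≤ n * (k + 1)) :
    eulerFactor c 1 k ≤ eulerFactor c n κ := by
  have hκ : (κ + 1 : ℝ) ≤ n * (k + 1) := by exact_mod_cast h
  simp only [eulerFactor, Nat.cast_one, one_pow, mul_one]
  gcongr 1 + ?_
  rw [div_le_div_iff₀ (by positivity) (by positivity), mul_assoc]
  gcongr c * ?_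
  have h' : (κ + 1 + n : ℝ) ≤ n * (k + 2) := by linarith
  calc ((κ:ℝ) + 1) * (κ + 1 + n) ≤ (n * (k + 1)) * (n * (k + 2)) := by gcongr
    _ = _ := by ring

theorem eulerFactor_one_zero_lt_eulerFactor_zero (hc : 0 < c) {n : ℕ} (hn : 2 ≤ n) :
    eulerFactor c 1 0 < eulerFactor c n 0 := by
  have hn : (2 : ℝ) ≤ n := by exact_mod_cast hn
  simp only [eulerFactor, Nat.cast_one, one_pow, mul_one, CharP.cast_eq_zero, zero_add]
  gcongr 1 + ?_
  rw [div_lt_div_iff₀ (by positivity) (by positivity)]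
  nlinarith [mul_pos hc (show (0 : ℝ) < 2 * n ^ 2 - n - 1 by nlinarith)]

theorem tendsto_prod_eulerFactor (n : ℕ) {a b : ℝ} (ha : 0 < 1 + n * a) (hb : 0 < 1 + n * b)
    (hab : a + b = 1) :
    Tendsto (fun m ↦ ∏ k ∈ range m, eulerFactor (a * b) n k) atTop
      (𝓝 (n.factorial / (Gamma (1 + n * a) * Gamma (1 + n * b)))) := by
  obtain rfl : b = 1 - a := by linarith
  rw [← Gamma_nat_eq_factorial]
  refine (tendsto_prod_div_Gamma ha hb (by positivity) (by ring)).congr fun m ↦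
    prod_congr rfl fun k _ ↦ ?_
  unfold eulerFactor
  field_simp
  ring

theorem eulerFactor_zero_mul_prod_pow_le (hc : 0 ≤ c) {n m : ℕ} (hn : 1 ≤ n) (hm : 1 ≤ m) :
    eulerFactor c n 0 * (∏ k ∈ range m, eulerFactor c 1 k) ^ n ≤
      eulerFactor c 1 0 * ∏ k ∈ range (n * m), eulerFactor c n k := by
  rw [← prod_range_mul_comp_div]
  simpa using mul_prod_le_mul_prod (s := range (n * m)) (i := 0)
    (fun k _ ↦ (zero_le_one.trans (one_le_eulerFactor hc 1 (k / n))))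
    (fun k _ ↦ eulerFactor_one_le_eulerFactor hc (Nat.lt_mul_div_succ k hn))
    (by simp only [mem_range]; positivity)

end eulerFactor

theorem Real.Gamma_mul_Gamma_lt {n : ℕ} (hn : 2 ≤ n) {a b : ℝ} (ha : 0 < a) (hb : 0 < b)
    (hab : a + b = 1) :
    Gamma (1 + n * a) * Gamma (1 + n * b) < n.factorial * (Gamma (1 + a) * Gamma (1 + b)) ^ n := by
  have hc : 0 < a * b := mul_pos ha hb
  have hX := (tendsto_prod_eulerFactor n (by positivity) (by positivity) hab).comp
    (tendsto_id.const_mul_atTop' (by omega : 0 < n))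
  have hY := tendsto_prod_eulerFactor 1 (by positivity) (by positivity) hab
  simp only [Nat.cast_one, one_mul, Nat.factorial_one] at hY
  have hgroup := le_of_tendsto_of_tendsto ((hY.pow n).const_mul _) (hX.const_mul _) <|
    eventually_atTop.2 ⟨1, fun m hm ↦ eulerFactor_zero_mul_prod_pow_le hc.le (by omega) hm⟩
  have hfac := eulerFactor_one_zero_lt_eulerFactor_zero hc hn
  have key : (1 / (Gamma (1 + a) * Gamma (1 + b))) ^ n <
      n.factorial / (Gamma (1 + n * a) * Gamma (1 + n * b)) :=
    lt_of_mul_lt_mul_left ((mul_lt_mul_of_pos_right hfac (by positivity)).trans_le hgroup)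
      (zero_le_one.trans (one_le_eulerFactor hc.le 1 0))
  rw [mul_comm (n.factorial : ℝ)]
  rwa [one_div_pow, one_div_lt (by positivity) (by positivity), one_div_div,
    div_lt_iff₀ (by positivity)] at key

theorem le_one_of_forall_mul_le_one {α : Type*} [Semifield α] [LinearOrder α]
    [IsStrictOrderedRing α] {a : α} (h : ∀ t, 0 ≤ t → t < 1 → t * a ≤ 1) : a ≤ 1 :=
  (le_iff_forall_one_lt_le_mul₀ zero_le_one).2 fun ε hε ↦ by
    have := h ε⁻¹ (by positivity) (inv_lt_one_of_one_lt₀ hε)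
    rwa [inv_mul_le_iff₀ (by positivity), mul_one, ← one_mul ε] at this

theorem Finset.sum_mul_le_sum_abs_mul_abs {ι R : Type*} [Ring R] [LinearOrder R]
    [IsOrderedRing R] (s : Finset ι) (x y : ι → R) :
    ∑ i ∈ s, y i * x i ≤ ∑ i ∈ s, |y i| * |x i| :=
  sum_le_sum fun _ _ ↦ (le_abs_self _).trans (abs_mul _ _).le

section lpBall

variable {n : ℕ}

theorem lpBall_of_ne_top {p : ℝ≥0∞} (hp : p ≠ ⊤) :
    lpBall n p = {x | ∑ i, |x i| ^ p.toReal < 1} :=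
  if_neg hp

theorem lpBall_one : lpBall n 1 = {x | ∑ i, |x i| < 1} := by
  simp [lpBall_of_ne_top ENNReal.one_ne_top]

theorem lpBall_top : lpBall n ⊤ = {x | ∀ i, |x i| < 1} :=
  if_pos rfl

theorem polarSet_lpBall_one : polarSet (lpBall n 1) = {x | ∀ i, |x i| ≤ 1} := by
  ext x
  simp only [polarSet, lpBall_one, Set.mem_ofPred_eq]
  refine ⟨fun hx i ↦ le_one_of_forall_mul_le_one fun t ht0 ht1 ↦ ?_, fun hx y hy ↦ ?_⟩
  · have hsingle (s : ℝ) (hs : |s| < 1) : s * x i ≤ 1 := by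
      simpa [Pi.single_apply] using
        hx (Pi.single i s) (by simpa [Pi.single_apply, apply_ite (|·|)] using hs)
    rw [← abs_of_nonneg ht0, ← abs_mul, abs_le]
    constructor
    · linarith [hsingle (-t) (by rwa [abs_neg, abs_of_nonneg ht0])]
    · exact hsingle t (by rwa [abs_of_nonneg ht0])
  · calc ∑ i, y i * x i ≤ ∑ i, |y i| * |x i| := sum_mul_le_sum_abs_mul_abs _ x y
      _ ≤ ∑ i, |y i| := sum_le_sum fun i _ ↦ mul_le_of_le_one_right (abs_nonneg _) (hx i)
      _ ≤ 1 := hy.le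

theorem polarSet_lpBall_top : polarSet (lpBall n ⊤) = {x | ∑ i, |x i| ≤ 1} := by
  ext x
  simp only [polarSet, lpBall_top, Set.mem_ofPred_eq]
  refine ⟨fun hx ↦ le_one_of_forall_mul_le_one fun t ht0 ht1 ↦ ?_, fun hx y hy ↦ ?_⟩
  · have hsign (i : Fin n) : |t * SignType.sign (x i)| < 1 := by
      rw [abs_mul, abs_of_nonneg ht0]
      refine (mul_le_of_le_one_right ht0 ?_).trans_lt ht1
      rcases lt_trichotomy (x i) 0 with h | h | h <;> simp [h]
    simpa [mul_sum, mul_assoc] using hx _ hsign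
  · calc ∑ i, y i * x i ≤ ∑ i, |y i| * |x i| := sum_mul_le_sum_abs_mul_abs _ x y
      _ ≤ ∑ i, |x i| := sum_le_sum fun i _ ↦ mul_le_of_le_one_left (abs_nonneg _) (hy i).le
      _ ≤ 1 := hx

theorem setOf_sum_rpow_lt_one_subset_polarSet {t q : ℝ} (htq : t.HolderConjugate q) :
    {x : Fin n → ℝ | ∑ i, |x i| ^ q < 1} ⊆ polarSet {y | ∑ i, |y i| ^ t < 1} := by
  intro x hx y hy
  have hnorm {r : ℝ} (hr : 0 < r) {z : Fin n → ℝ} (hz : ∑ i, |z i| ^ r < 1) :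
      (∑ i, |z i| ^ r) ^ (1 / r) ≤ 1 :=
    rpow_le_one (by positivity) hz.le (by positivity)
  calc ∑ i, y i * x i
      ≤ (∑ i, |y i| ^ t) ^ (1 / t) * (∑ i, |x i| ^ q) ^ (1 / q) :=
        inner_le_Lp_mul_Lq _ _ _ htq
    _ ≤ 1 := mul_le_one₀ (hnorm htq.pos hy) (by positivity) (hnorm htq.symm.pos hx)

end lpBall

section volume

variable (ι : Type*) [Fintype ι]

theorem volume_setOf_sum_abs_lt_one :
    volume {x : ι → ℝ | ∑ i, |x i| < 1} =
      .ofReal (2 ^ Fintype.card ι / (Fintype.card ι).factorial) := by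
  simpa [one_add_one_eq_two, Gamma_two, Gamma_nat_eq_factorial] using
    volume_sum_rpow_lt_one ι le_rfl

theorem volume_setOf_sum_abs_le_one [Nonempty ι] :
    volume {x : ι → ℝ | ∑ i, |x i| ≤ 1} =
      .ofReal (2 ^ Fintype.card ι / (Fintype.card ι).factorial) := by
  simpa [one_add_one_eq_two, Gamma_two, Gamma_nat_eq_factorial] using
    volume_sum_rpow_le ι le_rfl 1

theorem volume_setOf_forall_abs_lt_one :
    volume {x : ι → ℝ | ∀ i, |x i| < 1} = .ofReal (2 ^ Fintype.card ι) := by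
  have : {x : ι → ℝ | ∀ i, |x i| < 1} = Set.univ.pi fun _ ↦ Set.Ioo (-1) 1 := by
    ext x; simp [abs_lt]
  rw [this, volume_pi_pi]
  norm_num [ENNReal.ofReal_pow]

theorem volume_setOf_forall_abs_le_one :
    volume {x : ι → ℝ | ∀ i, |x i| ≤ 1} = .ofReal (2 ^ Fintype.card ι) := by
  have : {x : ι → ℝ | ∀ i, |x i| ≤ 1} = Set.univ.pi fun _ ↦ Set.Icc (-1) 1 := by
    ext x
    simp only [Set.mem_pi, Set.mem_univ, Set.mem_Icc, forall_const, abs_le, Set.mem_ofPred_eq]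
  rw [this, volume_pi_pi]
  norm_num [ENNReal.ofReal_pow]

end volume

theorem four_pow_div_factorial_lt_mul_of_holderConjugate {n : ℕ} (hn : 2 ≤ n) {t q : ℝ}
    (htq : t.HolderConjugate q) :
    4 ^ n / n.factorial <
      (2 * Gamma (1 / t + 1)) ^ n / Gamma (n / t + 1) *
        ((2 * Gamma (1 / q + 1)) ^ n / Gamma (n / q + 1)) := by
  have ht := htq.pos
  have hq := htq.symm.pos
  have hab : 1 / t + 1 / q = 1 := by simpa only [one_div] using htq.inv_add_inv_eq_one
  have key := Gamma_mul_Gamma_lt hn (by positivity) (by positivity) hab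
  have hnt : (n : ℝ) / t + 1 = 1 + n * (1 / t) := by ring
  have hnq : (n : ℝ) / q + 1 = 1 + n * (1 / q) := by ring
  rw [hnt, hnq, add_comm (1 / t), add_comm (1 / q), div_mul_div_comm, ← mul_pow,
    div_lt_div_iff₀ (by positivity) (by positivity)]
  calc 4 ^ n * (Gamma (1 + n * (1 / t)) * Gamma (1 + n * (1 / q)))
      < 4 ^ n * (n.factorial * (Gamma (1 + 1 / t) * Gamma (1 + 1 / q)) ^ n) := by gcongr
    _ = _ := by ring

theorem ofReal_four_pow_div_factorial_lt_volume_lpBall_mul {n : ℕ} (hn : 2 ≤ n) {p : ℝ≥0∞}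
    (hp1 : 1 < p) (hp : p ≠ ⊤) :
    .ofReal (4 ^ n / n.factorial) < volume (lpBall n p) * volume (polarSet (lpBall n p)) := by
  have ht : 1 < p.toReal := by simpa using ENNReal.toReal_strict_mono hp hp1
  have htq := Real.HolderConjugate.conjExponent ht
  have hq := htq.symm.pos
  have hball := volume_sum_rpow_lt_one (Fin n) ht.le
  have hpolar := volume_sum_rpow_lt_one (Fin n) htq.symm.lt.le
  rw [Fintype.card_fin] at hball hpolar
  calc ENNReal.ofReal (4 ^ n / n.factorial)
      < .ofReal ((2 * Gamma (1 / p.toReal + 1)) ^ n / Gamma (n / p.toReal + 1)) *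
          .ofReal ((2 * Gamma (1 / p.toReal.conjExponent + 1)) ^ n /
            Gamma (n / p.toReal.conjExponent + 1)) := by
        rw [← ENNReal.ofReal_mul (by positivity)]
        exact ENNReal.ofReal_lt_ofReal_iff'.2
          ⟨four_pow_div_factorial_lt_mul_of_holderConjugate hn htq, by positivity⟩
    _ ≤ volume (lpBall n p) * volume (polarSet (lpBall n p)) := by
        rw [← hball, ← hpolar, lpBall_of_ne_top hp]
        gcongr
        exact setOf_sum_rpow_lt_one_subset_polarSet htq

theorem ENNReal.ofReal_two_pow_div_factorial_mul (n : ℕ) :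
    ENNReal.ofReal (2 ^ n / n.factorial) * .ofReal (2 ^ n) = .ofReal (4 ^ n / n.factorial) := by
  rw [← ENNReal.ofReal_mul (by positivity), div_mul_eq_mul_div, ← mul_pow]
  norm_num

theorem volume_lpBall_one_mul_volume_polarSet (n : ℕ) :
    volume (lpBall n 1) * volume (polarSet (lpBall n 1)) = .ofReal (4 ^ n / n.factorial) := by
  rw [polarSet_lpBall_one, lpBall_one, volume_setOf_sum_abs_lt_one, volume_setOf_forall_abs_le_one,
    Fintype.card_fin, ENNReal.ofReal_two_pow_div_factorial_mul]

theorem volume_lpBall_top_mul_volume_polarSet {n : ℕ} (hn : n ≠ 0) :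
    volume (lpBall n ⊤) * volume (polarSet (lpBall n ⊤)) = .ofReal (4 ^ n / n.factorial) := by
  have : NeZero n := ⟨hn⟩
  rw [polarSet_lpBall_top, lpBall_top, volume_setOf_forall_abs_lt_one, volume_setOf_sum_abs_le_one,
    Fintype.card_fin, mul_comm, ENNReal.ofReal_two_pow_div_factorial_mul]

/-- For `n ≥ 2` and `p ∈ [1, ∞]`, equality `Vol(B^n_p) · Vol((B^n_p)°) = 4^n / n!`
holds if and only if `p = 1` or `p = ∞`. -/
theorem mahler_volume_lpBall_eq_iff (n : ℕ) (hn : 2 ≤ n) (p : ℝ≥0∞) (hp : 1 ≤ p) :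
    volume (lpBall n p) * volume (polarSet (lpBall n p)) =
      ENNReal.ofReal (4 ^ n / (Nat.factorial n : ℝ)) ↔ p = 1 ∨ p = ⊤ := by
  refine ⟨fun h ↦ ?_, ?_⟩
  · by_contra hp'
    obtain ⟨hp1, hptop⟩ := not_or.1 hp'
    exact (ofReal_four_pow_div_factorial_lt_volume_lpBall_mul hn (hp.lt_of_ne' hp1) hptop).ne' h
  · rintro (rfl | rfl)
    · exact volume_lpBall_one_mul_volume_polarSet n
    · exact volume_lpBall_top_mul_volume_polarSet (by omega)
end

section
/- The function p ↦ Vol(B^n_p) · Vol((B^n_p)°) is strictly monotone increasing on the interval [1, 2] for every integer n ≥ 2. -/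
open MeasureTheory
open scoped ENNReal

/-!
With `s = 1 / p`, Dirichlet's formula `Vol(B^n_p) = (2 Γ(1 + s))^n / Γ(1 + n s)` and the fact that
the polar of the open `ℓ^p` ball is the closed `ℓ^q` ball (the cube when `p = 1`) give
`Vol(B^n_p) Vol((B^n_p)°) = 4^n exp (L(s) + L(1 - s))`, `L(s) = n log Γ(1 + s) - log Γ(1 + n s)`.
By Gauss' product formula, `L(s) + L(1 - s)` is, up to a term depending only on `m`, the limit of
`∑_{j ≤ m} [log ((x + j)^2 - n^2 v) - n log ((j + 1)(j + 2) + 1/4 - v)]`, where `x = n/2 + 1` and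
`v = (s - 1/2)^2`. Comparing each logarithm with its tangent line shows that raising `v` by `δ`
lowers this sum by at least `δ (n^2 ∑ 1/(x + j)^2 - n ∑ 1/((j + 1)(j + 2)))`, and telescoping bounds
the bracket below by `n^2 (1/x^2 + 1/(x + 1)) - n > 0` up to an error that vanishes as `m → ∞`.
-/

open Real Filter Topology Finset

lemma Real.log_sub_log_le_sub_div {x y : ℝ} (hx : 0 < x) (hy : 0 < y) :
    log x - log y ≤ (x - y) / y := by
  have := log_le_sub_one_of_pos (div_pos hx hy)
  rwa [log_div hx.ne' hy.ne', div_sub_one hy.ne'] at this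

lemma sum_range_one_div_mul_add_one {y : ℝ} (hy : 0 < y) (M : ℕ) :
    ∑ j ∈ range M, 1 / ((y + j) * (y + j + 1)) = 1 / y - 1 / (y + M) := by
  have := sum_range_sub' (fun j : ℕ => 1 / (y + j)) M
  simp only [Nat.cast_add, Nat.cast_one, Nat.cast_zero, add_zero] at this
  rw [← this]
  refine sum_congr rfl fun j _ => ?_
  have : 0 < y + j := by positivity
  field_simp
  ring

lemma sum_range_one_div_mul_le_one (m : ℕ) :
    ∑ j ∈ range m, 1 / (((j : ℝ) + 1) * (j + 2)) ≤ 1 := by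
  have htel : ∑ j ∈ range m, 1 / (((j : ℝ) + 1) * (j + 2)) = 1 / 1 - 1 / (1 + m) := by
    rw [← sum_range_one_div_mul_add_one one_pos m]
    exact sum_congr rfl fun j _ => by ring_nf
  have : (0 : ℝ) ≤ 1 / (1 + m) := by positivity
  linarith

/-- The `j = 0` term is kept exact: its excess over `1 / (x * (x + 1))` is what makes the final
estimate strict when `n = 2`. -/
lemma le_sum_range_one_div_sq {x : ℝ} (hx : 0 < x) (m : ℕ) :
    1 / x ^ 2 + 1 / (x + 1) - 1 / (x + 1 + m) ≤ ∑ j ∈ range (m + 1), 1 / (x + j) ^ 2 := by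
  have htel := sum_range_one_div_mul_add_one (by linarith : 0 < x + 1) m
  have : ∑ j ∈ range m, 1 / ((x + 1 + j) * (x + 1 + j + 1)) ≤
      ∑ j ∈ range m, 1 / (x + (j + 1 : ℕ)) ^ 2 := by
    refine sum_le_sum fun j _ => one_div_le_one_div_of_le (by positivity) ?_
    push_cast
    nlinarith [(j.cast_nonneg : (0 : ℝ) ≤ j)]
  rw [sum_range_succ', Nat.cast_zero, add_zero]
  linarith

noncomputable def logGammaRatio (N s : ℝ) : ℝ :=
  N * log (Gamma (s + 1)) - log (Gamma (N * s + 1))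

lemma tendsto_logGammaRatio {N s : ℝ} (hN : 0 ≤ N) (hs : 0 ≤ s) :
    Tendsto (fun m : ℕ => ∑ j ∈ range (m + 1), (log (N * s + 1 + j) - N * log (s + 1 + j)) +
      (N - 1) * (log m + log m.factorial)) atTop (𝓝 (logGammaRatio N s)) := by
  refine (((BohrMollerup.tendsto_log_gamma (by positivity : 0 < s + 1)).const_mul N).sub
    (BohrMollerup.tendsto_log_gamma (by positivity : 0 < N * s + 1))).congr fun m => ?_
  simp only [BohrMollerup.logGammaSeq, sum_sub_distrib, ← mul_sum]
  ring

/-- The `j`-th term of Gauss' series for `logGammaRatio N s + logGammaRatio N (1 - s)`, as a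
function of `v = (s - 1 / 2) ^ 2`. -/
noncomputable def gaussTerm (N : ℝ) (j : ℕ) (v : ℝ) : ℝ :=
  log ((N / 2 + 1 + j) ^ 2 - N ^ 2 * v) - N * log ((j + 1) * (j + 2) + 1 / 4 - v)

lemma gaussTerm_sq_sub_half {N s : ℝ} (hN : 0 ≤ N) (hs : s ∈ Set.Icc 0 1) (j : ℕ) :
    gaussTerm N j ((s - 1 / 2) ^ 2) =
      (log (N * s + 1 + j) - N * log (s + 1 + j)) +
        (log (N * (1 - s) + 1 + j) - N * log (1 - s + 1 + j)) := by
  obtain ⟨hs0, hs1⟩ := hs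
  have hj : (0 : ℝ) ≤ j := j.cast_nonneg
  have h1 : 0 < N * s + 1 + j := by positivity
  have h2 : 0 < N * (1 - s) + 1 + j := by nlinarith
  rw [gaussTerm, show (N / 2 + 1 + j) ^ 2 - N ^ 2 * (s - 1 / 2) ^ 2 =
      (N * s + 1 + j) * (N * (1 - s) + 1 + j) by ring,
    show ((j : ℝ) + 1) * (j + 2) + 1 / 4 - (s - 1 / 2) ^ 2 = (s + 1 + j) * (1 - s + 1 + j) by ring,
    log_mul h1.ne' h2.ne', log_mul (by linarith) (by linarith)]
  ring

lemma gaussTerm_sub_gaussTerm_ge {N v w : ℝ} (hN : 0 ≤ N) (hv : 0 ≤ v) (hvw : v ≤ w)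
    (hw : w ≤ 1 / 4) (j : ℕ) :
    (w - v) * (N ^ 2 / (N / 2 + 1 + j) ^ 2 - N / ((j + 1) * (j + 2))) ≤
      gaussTerm N j v - gaussTerm N j w := by
  set A : ℝ := (N / 2 + 1 + j) ^ 2
  set B : ℝ := (j + 1) * (j + 2)
  have hB : 0 < B := by positivity
  have hAw : 0 < A - N ^ 2 * w := by
    have : A - N ^ 2 / 4 = (j + 1) * (N + j + 1) := by ring
    nlinarith [mul_le_mul_of_nonneg_left hw (sq_nonneg N)]
  have hAv : A - N ^ 2 * v ≤ A := by nlinarith [mul_nonneg (sq_nonneg N) hv]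
  have hAwv : A - N ^ 2 * w ≤ A - N ^ 2 * v := by
    nlinarith [mul_le_mul_of_nonneg_left hvw (sq_nonneg N)]
  have hlogA : N ^ 2 * (w - v) / A ≤ log (A - N ^ 2 * v) - log (A - N ^ 2 * w) := by
    calc N ^ 2 * (w - v) / A ≤ N ^ 2 * (w - v) / (A - N ^ 2 * v) :=
          div_le_div_of_nonneg_left (by nlinarith) (by linarith) hAv
      _ ≤ _ := by
          have := log_sub_log_le_sub_div hAw (by linarith : 0 < A - N ^ 2 * v)
          rw [show A - N ^ 2 * w - (A - N ^ 2 * v) = -(N ^ 2 * (w - v)) by ring, neg_div] at this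
          linarith
  have hlogB : log (B + 1 / 4 - v) - log (B + 1 / 4 - w) ≤ (w - v) / B := by
    calc _ ≤ (w - v) / (B + 1 / 4 - w) := by
          convert log_sub_log_le_sub_div (x := B + 1 / 4 - v) (y := B + 1 / 4 - w)
            (by linarith) (by linarith) using 2
          ring
      _ ≤ (w - v) / B := div_le_div_of_nonneg_left (by linarith) hB (by linarith)
  have hN' := mul_le_mul_of_nonneg_left hlogB hN
  unfold gaussTerm
  calc (w - v) * (N ^ 2 / A - N / B) = N ^ 2 * (w - v) / A - N * ((w - v) / B) := by ring
    _ ≤ _ := by linarith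

lemma sum_gaussTerm_sub_ge {N v w : ℝ} (hN : 0 ≤ N) (hv : 0 ≤ v) (hvw : v ≤ w)
    (hw : w ≤ 1 / 4) (m : ℕ) :
    (w - v) * (N ^ 2 * (1 / (N / 2 + 1) ^ 2 + 1 / (N / 2 + 1 + 1) - 1 / (N / 2 + 1 + 1 + m)) - N) ≤
      ∑ j ∈ range (m + 1), (gaussTerm N j v - gaussTerm N j w) := by
  have hx : 0 < N / 2 + 1 := by positivity
  calc _ ≤ (w - v) * (N ^ 2 * ∑ j ∈ range (m + 1), 1 / (N / 2 + 1 + j) ^ 2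
        - N * ∑ j ∈ range (m + 1), 1 / (((j : ℝ) + 1) * (j + 2))) := by
        refine mul_le_mul_of_nonneg_left ?_ (sub_nonneg.2 hvw)
        have h1 := mul_le_mul_of_nonneg_left (le_sum_range_one_div_sq hx m) (sq_nonneg N)
        have h2 := mul_le_mul_of_nonneg_left (sum_range_one_div_mul_le_one (m + 1)) hN
        linarith
    _ = ∑ j ∈ range (m + 1), (w - v) * (N ^ 2 / (N / 2 + 1 + j) ^ 2 - N / ((j + 1) * (j + 2))) := by
        simp only [mul_sum, ← sum_sub_distrib, mul_one_div]
    _ ≤ _ := sum_le_sum fun j _ => gaussTerm_sub_gaussTerm_ge hN hv hvw hw j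

theorem logGammaRatio_add_one_sub_lt {N s t : ℝ} (hN : 2 ≤ N) (hs : s ∈ Set.Icc 0 1)
    (ht : t ∈ Set.Icc 0 1) (hst : (s - 1 / 2) ^ 2 < (t - 1 / 2) ^ 2) :
    logGammaRatio N t + logGammaRatio N (1 - t) < logGammaRatio N s + logGammaRatio N (1 - s) := by
  have hN0 : 0 ≤ N := by linarith
  have hw : (t - 1 / 2) ^ 2 ≤ 1 / 4 := by nlinarith [ht.1, ht.2]
  have hlim : Tendsto (fun m : ℕ => ∑ j ∈ range (m + 1),
      (gaussTerm N j ((s - 1 / 2) ^ 2) - gaussTerm N j ((t - 1 / 2) ^ 2))) atTop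
      (𝓝 (logGammaRatio N s + logGammaRatio N (1 - s) -
        (logGammaRatio N t + logGammaRatio N (1 - t)))) := by
    have hT (u : ℝ) (hu : u ∈ Set.Icc (0 : ℝ) 1) :=
      (tendsto_logGammaRatio hN0 hu.1).add (tendsto_logGammaRatio hN0 (sub_nonneg.2 hu.2))
    refine ((hT s hs).sub (hT t ht)).congr fun m => ?_
    simp only [sum_sub_distrib, gaussTerm_sq_sub_half hN0 hs, gaussTerm_sq_sub_half hN0 ht,
      sum_add_distrib]
    ring
  have hbound : Tendsto (fun m : ℕ => ((t - 1 / 2) ^ 2 - (s - 1 / 2) ^ 2) *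
      (N ^ 2 * (1 / (N / 2 + 1) ^ 2 + 1 / (N / 2 + 1 + 1) - 1 / (N / 2 + 1 + 1 + m)) - N)) atTop
      (𝓝 (((t - 1 / 2) ^ 2 - (s - 1 / 2) ^ 2) *
        (N ^ 2 * (1 / (N / 2 + 1) ^ 2 + 1 / (N / 2 + 1 + 1) - 0) - N))) :=
    ((tendsto_const_nhds.div_atTop (tendsto_atTop_add_const_left _ _
      tendsto_natCast_atTop_atTop)).const_sub _ |>.const_mul _ |>.sub_const _).const_mul _
  have hgap : N < N ^ 2 * (1 / (N / 2 + 1) ^ 2 + 1 / (N / 2 + 1 + 1)) := by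
    rw [div_add_div _ _ (by positivity) (by positivity), mul_div_assoc',
      lt_div_iff₀ (by positivity)]
    nlinarith [mul_pos (by linarith : (0 : ℝ) < N) (by linarith : (0 : ℝ) < N / 2 + 1)]
  have hpos := mul_pos (sub_pos.2 hst) (sub_pos.2 hgap)
  have hlower := le_of_tendsto_of_tendsto' hbound hlim
    (sum_gaussTerm_sub_ge hN0 (sq_nonneg _) hst.le hw)
  rw [sub_zero] at hlower
  linarith

lemma polarSet_sum_abs_lt_one {n : ℕ} :
    polarSet {y : Fin n → ℝ | ∑ i, |y i| < 1} = Metric.closedBall 0 1 := by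
  ext x
  simp only [polarSet, Set.mem_ofPred_eq, mem_closedBall_zero_iff,
    pi_norm_le_iff_of_nonneg zero_le_one, Real.norm_eq_abs]
  refine ⟨fun hx i => ?_, fun hx y hy => ?_⟩
  · by_contra! hi
    obtain ⟨u, hu1, hux⟩ := exists_between hi
    have hx0 : x i ≠ 0 := abs_pos.1 (by linarith)
    have := hx (Pi.single i (u / x i)) (by
      rw [Fintype.sum_eq_single i fun j hj => by simp [hj], Pi.single_eq_same, abs_div,
        div_lt_one (by linarith)]
      rwa [abs_of_pos (by linarith)])
    rw [Fintype.sum_eq_single i fun j hj => by simp [hj], Pi.single_eq_same,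
      div_mul_cancel₀ _ hx0] at this
    linarith
  · calc ∑ i, y i * x i ≤ ∑ i, |y i| := sum_le_sum fun i _ => by
          calc y i * x i ≤ |y i * x i| := le_abs_self _
            _ ≤ |y i| := by rw [abs_mul]; exact mul_le_of_le_one_right (abs_nonneg _) (hx i)
      _ ≤ 1 := hy.le

lemma polarSet_sum_rpow_lt_one {n : ℕ} {p q : ℝ} (hpq : p.HolderConjugate q) :
    polarSet {y : Fin n → ℝ | ∑ i, |y i| ^ p < 1} = {x | (∑ i, |x i| ^ q) ^ (1 / q) ≤ 1} := by
  have hq := hpq.symm.pos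
  ext x
  simp only [polarSet, Set.mem_ofPred_eq]
  refine ⟨fun hx => ?_, fun hx y hy => ?_⟩
  · set S := ∑ i, |x i| ^ q
    have hS0 : 0 ≤ S := by positivity
    by_contra! hxS
    have hS : 1 < S := by
      by_contra! hS
      exact hxS.not_ge (rpow_le_one hS0 hS (by positivity))
    -- the dual vector of `x`, rescaled by any `c` with `S ^ (1 / p) < c < S`
    obtain ⟨c, hSc, hcS⟩ := exists_between
      (rpow_lt_self_of_one_lt hS ((div_lt_one hpq.pos).2 hpq.lt) : S ^ (1 / p) < S)
    have hc : 0 < c := lt_of_le_of_lt (by positivity) hSc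
    set y : Fin n → ℝ := fun i => |x i| ^ (q - 2) * x i / c
    have hyx (i : Fin n) : y i * x i = |x i| ^ q / c := by
      rw [div_mul_eq_mul_div, mul_assoc, ← abs_mul_abs_self, ← mul_assoc, ← rpow_add_one'
        (abs_nonneg _) (by linarith [hpq.symm.lt]), ← rpow_add_one' (abs_nonneg _) (by linarith),
        show q - 2 + 1 + 1 = q by ring]
    have hy (i : Fin n) : |y i| ^ p = |x i| ^ q / c ^ p := by
      rw [abs_div, abs_mul, abs_of_pos hc, abs_of_nonneg (by positivity), ← rpow_add_one'
        (abs_nonneg _) (by linarith [hpq.symm.lt]), div_rpow (by positivity) hc.le,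
        ← rpow_mul (abs_nonneg _), show q - 2 + 1 = q - 1 by ring, hpq.symm.sub_one_mul_conj]
    have hyS : ∑ i, |y i| ^ p < 1 := by
      rw [Finset.sum_congr rfl fun i _ => hy i, ← sum_div, div_lt_one (rpow_pos_of_pos hc p)]
      calc S = (S ^ (1 / p)) ^ p := by rw [← rpow_mul hS0, one_div_mul_cancel hpq.ne_zero, rpow_one]
        _ < c ^ p := rpow_lt_rpow (by positivity) hSc hpq.pos
    have := hx y hyS
    rw [Finset.sum_congr rfl fun i _ => hyx i, ← sum_div, div_le_one hc] at this
    linarith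
  · calc ∑ i, y i * x i ≤ (∑ i, |y i| ^ p) ^ (1 / p) * (∑ i, |x i| ^ q) ^ (1 / q) :=
          inner_le_Lp_mul_Lq univ y x hpq
      _ ≤ 1 := mul_le_one₀ (rpow_le_one (by positivity) hy.le (one_div_pos.2 hpq.pos).le)
          (rpow_nonneg (by positivity) _) hx

/-- The volume of the unit ball of `ℓ^p` on `ℝ^n`, as a function of `s = 1 / p`. -/
noncomputable def lpBallVolume (n : ℕ) (s : ℝ) : ℝ :=
  (2 * Gamma (s + 1)) ^ n / Gamma (n * s + 1)

lemma lpBallVolume_eq_exp (n : ℕ) {s : ℝ} (hs : 0 ≤ s) :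
    lpBallVolume n s = 2 ^ n * exp (logGammaRatio n s) := by
  rw [lpBallVolume, logGammaRatio, exp_sub, exp_nat_mul, exp_log (Gamma_pos_of_pos (by positivity)),
    exp_log (Gamma_pos_of_pos (by positivity)), mul_pow, mul_div_assoc]

lemma lpBallVolume_pos (n : ℕ) {s : ℝ} (hs : 0 ≤ s) : 0 < lpBallVolume n s := by
  rw [lpBallVolume_eq_exp n hs]
  positivity

theorem strictAntiOn_lpBallVolume_mul_lpBallVolume_one_sub {n : ℕ} (hn : 2 ≤ n) :
    StrictAntiOn (fun s => lpBallVolume n s * lpBallVolume n (1 - s)) (Set.Icc (1 / 2) 1) := by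
  intro s hs t ht hst
  have hs' : s ∈ Set.Icc (0 : ℝ) 1 := ⟨by linarith [hs.1], hs.2⟩
  have ht' : t ∈ Set.Icc (0 : ℝ) 1 := ⟨by linarith [ht.1], ht.2⟩
  have hlt := logGammaRatio_add_one_sub_lt (N := n) (by exact_mod_cast hn) hs' ht'
    (pow_lt_pow_left₀ (by linarith) (by linarith [hs.1]) two_ne_zero)
  dsimp only
  simp only [lpBallVolume_eq_exp n hs'.1, lpBallVolume_eq_exp n ht'.1,
    lpBallVolume_eq_exp n (sub_nonneg.2 hs'.2), lpBallVolume_eq_exp n (sub_nonneg.2 ht'.2),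
    mul_mul_mul_comm _ (exp _), ← exp_add]
  gcongr

lemma volume_lpBall (n : ℕ) {p : ℝ≥0∞} (hp : 1 ≤ p) (hp_top : p ≠ ⊤) :
    volume (lpBall n p) = ENNReal.ofReal (lpBallVolume n p.toReal⁻¹) := by
  have hp' : 1 ≤ p.toReal := by simpa using ENNReal.toReal_mono hp_top hp
  rw [lpBall, if_neg hp_top, volume_sum_rpow_lt_one (Fin n) hp', Fintype.card_fin, lpBallVolume,
    one_div, div_eq_mul_inv (n : ℝ)]

lemma volume_polarSet_lpBall (n : ℕ) [NeZero n] {p : ℝ≥0∞} (hp : 1 ≤ p) (hp_top : p ≠ ⊤) :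
    volume (polarSet (lpBall n p)) = ENNReal.ofReal (lpBallVolume n (1 - p.toReal⁻¹)) := by
  have hp' : 1 ≤ p.toReal := by simpa using ENNReal.toReal_mono hp_top hp
  rw [lpBall, if_neg hp_top]
  rcases hp'.eq_or_lt with h | h
  · simp [← h, polarSet_sum_abs_lt_one, lpBallVolume]
  · have hpq := Real.HolderConjugate.conjExponent h
    rw [polarSet_sum_rpow_lt_one hpq, volume_sum_rpow_le (Fin n) hpq.symm.lt.le, ENNReal.ofReal_one,
      one_pow, one_mul, Fintype.card_fin, lpBallVolume, hpq.one_sub_inv, one_div,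
      div_eq_mul_inv (n : ℝ)]

lemma volume_lpBall_mul_volume_polarSet (n : ℕ) [NeZero n] {p : ℝ≥0∞} (hp : 1 ≤ p)
    (hp_top : p ≠ ⊤) :
    volume (lpBall n p) * volume (polarSet (lpBall n p)) =
      ENNReal.ofReal (lpBallVolume n p.toReal⁻¹ * lpBallVolume n (1 - p.toReal⁻¹)) := by
  rw [volume_lpBall n hp hp_top, volume_polarSet_lpBall n hp hp_top,
    ← ENNReal.ofReal_mul (lpBallVolume_pos n (by positivity)).le]

lemma inv_toReal_mem_Icc {p : ℝ≥0∞} (hp : p ∈ Set.Icc 1 2) :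
    p.toReal⁻¹ ∈ Set.Icc (1 / 2) 1 := by
  have hp_top : p ≠ ⊤ := ne_top_of_le_ne_top ENNReal.ofNat_ne_top hp.2
  have h1 : 1 ≤ p.toReal := by simpa using ENNReal.toReal_mono hp_top hp.1
  have h2 : p.toReal ≤ 2 := by simpa using ENNReal.toReal_mono ENNReal.ofNat_ne_top hp.2
  rw [one_div]
  exact ⟨inv_anti₀ (by linarith) h2, inv_le_one_of_one_le₀ h1⟩

/-- For every integer `n ≥ 2`, the Mahler volume `p ↦ Vol(B^n_p)·Vol((B^n_p)°)`
is strictly monotone increasing on the interval `[1, 2]`. -/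
theorem mahler_volume_lpBall_strictMonoOn (n : ℕ) (hn : 2 ≤ n) :
    StrictMonoOn (fun p : ℝ≥0∞ => volume (lpBall n p) * volume (polarSet (lpBall n p)))
      (Set.Icc (1 : ℝ≥0∞) 2) := by
  have : NeZero n := ⟨by omega⟩
  intro p hp q hq hpq
  have hp_top : p ≠ ⊤ := ne_top_of_le_ne_top ENNReal.ofNat_ne_top hp.2
  have hq_top : q ≠ ⊤ := ne_top_of_le_ne_top ENNReal.ofNat_ne_top hq.2
  simp only [volume_lpBall_mul_volume_polarSet n hp.1 hp_top,
    volume_lpBall_mul_volume_polarSet n hq.1 hq_top]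
  rw [ENNReal.ofReal_lt_ofReal_iff (mul_pos (lpBallVolume_pos n (by positivity))
    (lpBallVolume_pos n (sub_nonneg.2 (inv_toReal_mem_Icc hq).2)))]
  refine strictAntiOn_lpBallVolume_mul_lpBallVolume_one_sub hn (inv_toReal_mem_Icc hq)
    (inv_toReal_mem_Icc hp) ?_
  exact inv_strictAnti₀ (ENNReal.toReal_pos (zero_lt_one.trans_le hp.1).ne' hp_top)
    (ENNReal.toReal_strict_mono hq_top hpq)
end

section
/- For s > −1, the digamma function satisfies ψ(s + 1) = −γ + ∫_0^1 (1 − x^s)/(1 − x) dx, where γ is the Euler–Mascheroni constant. -/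
/-- The digamma function `ψ = Γ'/Γ`. -/
noncomputable def digamma (x : ℝ) : ℝ := deriv Real.Gamma x / Real.Gamma x

/-!
Both `s ↦ ψ(s + 1)` and `s ↦ -γ + ∫₀¹ (1 - x^s)/(1 - x) dx` are monotone on `(-1, ∞)`, take the
value `-γ` at `0` and increase by `1/(s + 1)` from `s` to `s + 1`: for `ψ` this is `Γ(x + 1) = xΓ(x)`
together with the log-convexity of `Γ`, for the integral it is `∫₀¹ x^s dx = 1/(s + 1)`. Their
difference is therefore `1`-periodic, and since both are monotone with increments tending to `0`,
it is squeezed to `0` far out, hence everywhere.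
-/

open Real Set Filter Topology MeasureTheory intervalIntegral

section MonotoneOnAddOne

variable {f g r : ℝ → ℝ} {a : ℝ}

lemma abs_sub_le_of_monotoneOn_of_add_one_eq (hf : MonotoneOn f (Ioi a))
    (hg : MonotoneOn g (Ioi a)) (hf_add : ∀ x > a, f (x + 1) = f x + r x)
    (hg_add : ∀ x > a, g (x + 1) = g x + r x) {x y : ℝ} (hy : a < y) (hyx : y ≤ x)
    (hxy : x ≤ y + 1) (hfg : f y = g y) : |f x - g x| ≤ r y := by
  have hx : a < x := hy.trans_le hyx
  have hy₁ : a < y + 1 := by linarith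
  have hf_le := hf hx hy₁ hxy
  have hg_le := hg hx hy₁ hxy
  rw [hf_add y hy] at hf_le
  rw [hg_add y hy] at hg_le
  rw [abs_sub_le_iff]
  constructor <;> linarith [hf hy hx hyx, hg hy hx hyx]

theorem eqOn_of_monotoneOn_of_add_one_eq {b : ℝ} (hf : MonotoneOn f (Ioi a))
    (hg : MonotoneOn g (Ioi a)) (hf_add : ∀ x > a, f (x + 1) = f x + r x)
    (hg_add : ∀ x > a, g (x + 1) = g x + r x) (hr : Tendsto r atTop (𝓝 0)) (hb : a < b)
    (hfg : f b = g b) : EqOn f g (Ioi a) := by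
  have periodic : ∀ x > a, ∀ n : ℕ, f (x + n) - g (x + n) = f x - g x := by
    intro x hx n
    induction n with
    | zero => simp
    | succ n ih =>
      have hxn : x + n > a := by linarith [n.cast_nonneg (α := ℝ)]
      rw [Nat.cast_succ, ← add_assoc, hf_add _ hxn, hg_add _ hxn, ← ih]
      ring
  intro x hx
  -- `y n` is the point of `b + ℕ` just below `x + n`.
  set y : ℕ → ℝ := fun n => b + ⌊x + n - b⌋₊
  have hy : Tendsto y atTop atTop := by
    refine tendsto_atTop_add_const_left _ b (tendsto_natCast_atTop_atTop.comp ?_)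
    refine tendsto_nat_floor_atTop.comp (tendsto_atTop_add_const_right _ (-b) ?_)
    exact tendsto_atTop_add_const_left _ x tendsto_natCast_atTop_atTop
  have hbound : ∀ᶠ n : ℕ in atTop, |f x - g x| ≤ r (y n) := by
    filter_upwards [eventually_ge_atTop ⌈b - x⌉₊] with n hn
    have hxnb : 0 ≤ x + n - b := by linarith [Nat.ceil_le.1 hn]
    rw [← periodic x hx n]
    refine abs_sub_le_of_monotoneOn_of_add_one_eq hf hg hf_add hg_add ?_ ?_ ?_ ?_
    · linarith [(⌊x + n - b⌋₊).cast_nonneg (α := ℝ)]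
    · linarith [Nat.floor_le hxnb]
    · linarith [Nat.lt_floor_add_one (x + n - b)]
    · rw [← sub_eq_zero, periodic b hb, hfg, sub_self]
  have : |f x - g x| ≤ 0 := ge_of_tendsto (hr.comp hy) hbound
  exact sub_eq_zero.1 (abs_nonpos_iff.1 this)

end MonotoneOnAddOne

section Digamma

lemma differentiableAt_Gamma_of_pos {x : ℝ} (hx : 0 < x) : DifferentiableAt ℝ Gamma x :=
  differentiableOn_Gamma_Ioi.differentiableAt (Ioi_mem_nhds hx)

lemma digamma_eq_deriv_log_Gamma {x : ℝ} (hx : 0 < x) :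
    digamma x = deriv (log ∘ Gamma) x := by
  rw [digamma, Function.comp_def,
    deriv.log (differentiableAt_Gamma_of_pos hx) (Gamma_pos_of_pos hx).ne']

lemma monotoneOn_digamma : MonotoneOn digamma (Ioi 0) := by
  intro x hx y hy hxy
  rw [digamma_eq_deriv_log_Gamma hx, digamma_eq_deriv_log_Gamma hy]
  exact convexOn_log_Gamma.monotoneOn_deriv
    (fun z hz => (differentiableAt_Gamma_of_pos hz).log (Gamma_pos_of_pos hz).ne') hx hy hxy

lemma deriv_Gamma_add_one {x : ℝ} (hx : 0 < x) :
    deriv Gamma (x + 1) = Gamma x + x * deriv Gamma x := by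
  have hΓ : (fun y => Gamma (y + 1)) =ᶠ[𝓝 x] fun y => y * Gamma y := by
    filter_upwards [eventually_gt_nhds hx] with y hy using Gamma_add_one hy.ne'
  rw [← deriv_comp_add_const, hΓ.deriv_eq,
    deriv_fun_mul differentiableAt_fun_id (differentiableAt_Gamma_of_pos hx), deriv_id'', one_mul]

lemma digamma_add_one {x : ℝ} (hx : 0 < x) : digamma (x + 1) = digamma x + x⁻¹ := by
  have := (Gamma_pos_of_pos hx).ne'
  rw [digamma, digamma, deriv_Gamma_add_one hx, Gamma_add_one hx.ne']
  field_simp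
  ring

lemma digamma_one : digamma 1 = -eulerMascheroniConstant := by
  rw [digamma, hasDerivAt_Gamma_one.deriv, Gamma_one, div_one]

end Digamma

section DirichletIntegral

noncomputable def dirichletIntegral (s : ℝ) : ℝ := ∫ x in (0 : ℝ)..1, (1 - x ^ s) / (1 - x)

lemma one_sub_rpow_div_one_sub_eq_dslope {s x : ℝ} (hx : x ≠ 1) :
    (1 - x ^ s) / (1 - x) = dslope (· ^ s) 1 x := by
  rw [dslope_of_ne _ hx, slope_def_field, one_rpow, ← neg_div_neg_eq, neg_sub, neg_sub]

lemma intervalIntegrable_one_sub_rpow_div_one_sub {s : ℝ} (hs : -1 < s) :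
    IntervalIntegrable (fun x : ℝ => (1 - x ^ s) / (1 - x)) volume 0 1 := by
  have near_zero : IntervalIntegrable (fun x : ℝ => (1 - x ^ s) / (1 - x)) volume 0 (1 / 2) := by
    simp_rw [div_eq_mul_inv]
    refine (intervalIntegrable_const.sub (intervalIntegrable_rpow' hs)).mul_continuousOn ?_
    refine ContinuousOn.inv₀ (by fun_prop) fun x hx => ?_
    rw [uIcc_of_le (by norm_num)] at hx
    linarith [hx.2]
  -- Near `1` the integrand is the slope of `x ↦ x ^ s` at `1`, which extends continuously.
  have near_one : IntervalIntegrable (fun x : ℝ => (1 - x ^ s) / (1 - x)) volume (1 / 2) 1 := by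
    have hcont : ContinuousOn (dslope (· ^ s) (1 : ℝ)) (Ioi 0) :=
      (continuousOn_dslope (Ioi_mem_nhds one_pos)).2
        ⟨fun x hx => (continuousAt_rpow_const x s (Or.inl (ne_of_gt hx))).continuousWithinAt,
          differentiableAt_rpow_const_of_ne s one_ne_zero⟩
    refine (hcont.mono fun x hx => ?_).intervalIntegrable.congr_uIoo fun x hx => ?_
    · rw [uIcc_of_le (by norm_num)] at hx
      exact lt_of_lt_of_le (by norm_num) hx.1
    · rw [uIoo_of_le (by norm_num)] at hx
      exact (one_sub_rpow_div_one_sub_eq_dslope hx.2.ne).symm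
  exact near_zero.trans near_one

lemma dirichletIntegral_zero : dirichletIntegral 0 = 0 := by
  simp [dirichletIntegral]

lemma dirichletIntegral_add_one {s : ℝ} (hs : -1 < s) :
    dirichletIntegral (s + 1) = dirichletIntegral s + (s + 1)⁻¹ := by
  have hdiff : dirichletIntegral (s + 1) - dirichletIntegral s = ∫ x in (0 : ℝ)..1, x ^ s := by
    rw [dirichletIntegral, dirichletIntegral, ← integral_sub
      (intervalIntegrable_one_sub_rpow_div_one_sub (by linarith))
      (intervalIntegrable_one_sub_rpow_div_one_sub hs)]
    refine integral_congr_Ioo_of_le zero_le_one fun x hx => ?_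
    have : 1 - x ≠ 0 := sub_ne_zero.2 hx.2.ne'
    simp only [rpow_add_one hx.1.ne']
    field_simp
    ring
  rw [← sub_eq_iff_eq_add', hdiff, integral_rpow (Or.inl hs), one_rpow,
    zero_rpow (by linarith), sub_zero, one_div]

lemma monotoneOn_dirichletIntegral : MonotoneOn dirichletIntegral (Ioi (-1)) := by
  intro s hs t ht hst
  refine integral_mono_on_of_le_Ioo zero_le_one (intervalIntegrable_one_sub_rpow_div_one_sub hs)
    (intervalIntegrable_one_sub_rpow_div_one_sub ht) fun x hx => ?_
  have : x ^ t ≤ x ^ s := rpow_le_rpow_of_exponent_ge hx.1 hx.2.le hst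
  have : 0 < 1 - x := sub_pos.2 hx.2
  gcongr

end DirichletIntegral

/-- Dirichlet's formula: for `s > −1`,
`ψ(s + 1) = −γ + ∫_0^1 (1 − x^s)/(1 − x) dx`. -/
theorem digamma_dirichlet_formula (s : ℝ) (hs : -1 < s) :
    digamma (s + 1) =
      -Real.eulerMascheroniConstant + ∫ x in (0 : ℝ)..1, (1 - x ^ s) / (1 - x) := by
  have hpos : ∀ x > (-1 : ℝ), 0 < x + 1 := fun x hx => by linarith
  refine eqOn_of_monotoneOn_of_add_one_eq (f := fun s => digamma (s + 1))
    (g := fun s => -eulerMascheroniConstant + dirichletIntegral s) (r := fun s => (s + 1)⁻¹)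
    (b := 0)
    ?_ ?_ ?_ ?_ ?_ (by norm_num) ?_ hs
  · intro x hx y hy hxy
    exact monotoneOn_digamma (hpos x hx) (hpos y hy) (by linarith)
  · exact fun x hx y hy hxy => add_le_add_right (monotoneOn_dirichletIntegral hx hy hxy) _
  · exact fun x hx => digamma_add_one (hpos x hx)
  · intro x hx
    simp only [dirichletIntegral_add_one hx, add_assoc]
  · exact tendsto_inv_atTop_zero.comp (tendsto_atTop_add_const_right _ 1 tendsto_id)
  · simp [digamma_one, dirichletIntegral_zero]
end
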